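/- arXiv:nlin/0412067 — 5 statements merged into one kernel-verified Lean document; each statement's English description precedes it below -/
import Mathlib

section
/- Let q ∈ ℂ with |q| < 1, α ∈ ℂ, n a positive integer, k a nonnegative integer, and ζ = exp(2πi/n). Let ρ, γ ∈ ℂ be any n-th roots with ρ^n = q and γ^n = (1−q)α. Then for every positive integer m, the m-th component of [q^k α]_q^{(n)} equals the m-th component of [α]_q^{(n)} minus ∑_{j=1}^{n} ∑_{ℓ=0}^{k−1} (ζ^j γ ρ^ℓ)^m / m. -/
open Complex Finset

open scoped Real

/-- The `m`-th component of the sequence `[α]_q^{(n)}`: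
it equals `(1-q)^k α^k / (k (1-q^k))` if `m = k n` for a positive integer `k`, and `0` otherwise. -/
noncomputable def bracketQ (q α : ℂ) (n m : ℕ) : ℂ :=
  if n ∣ m then (1 - q) ^ (m / n) * α ^ (m / n) / ((m / n : ℕ) * (1 - q ^ (m / n))) else 0

/-- The iterated q-difference relation
`[q^k α]_q^{(n)} = [α]_q^{(n)} - ∑_{j=1}^{n} ∑_{ℓ=0}^{k-1} [ζ^j γ ρ^ℓ]`, componentwise,
where `ζ = exp(2πi/n)`, `ρ^n = q` and `γ^n = (1-q)α`. -/
theorem bracketQ_qpow_mul (q α : ℂ) (hq : ‖q‖ < 1) (n : ℕ) (hn : 0 < n) (k : ℕ)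
    (ρ γ : ℂ) (hρ : ρ ^ n = q) (hγ : γ ^ n = (1 - q) * α) (m : ℕ) (hm : 0 < m) :
    bracketQ q (q ^ k * α) n m =
      bracketQ q α n m -
        ∑ j ∈ Finset.Icc 1 n, ∑ ℓ ∈ Finset.range k,
          ((Complex.exp (2 * π * Complex.I / n)) ^ j * γ * ρ ^ ℓ) ^ m / (m : ℂ) := by
  set ζ : ℂ := Complex.exp (2 * π * Complex.I / n) with hζdef
  have hprim : IsPrimitiveRoot ζ n := Complex.isPrimitiveRoot_exp n hn.ne'
  have hterm : ∀ j ∈ Finset.Icc 1 n, ∀ ℓ ∈ Finset.range k,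
      (ζ ^ j * γ * ρ ^ ℓ) ^ m / (m : ℂ) = (ζ ^ m) ^ j * ((γ ^ m * (ρ ^ m) ^ ℓ) / m) := by
    intro j _ ℓ _
    rw [mul_pow, mul_pow, ← pow_mul, ← pow_mul, mul_comm j m, mul_comm ℓ m,
      pow_mul, pow_mul]
    ring
  rw [Finset.sum_congr rfl (fun j hj => Finset.sum_congr rfl (hterm j hj)),
    ← Finset.sum_mul_sum]
  by_cases hd : n ∣ m
  · obtain ⟨K, hK⟩ := hd
    have hK0 : 0 < K := by
      rcases Nat.eq_zero_or_pos K with h | h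
      · subst h; simp at hK; omega
      · exact h
    have hmn : m / n = K := by rw [hK, Nat.mul_div_cancel_left K hn]
    have hz1 : ζ ^ m = 1 := by rw [hK, pow_mul, hprim.pow_eq_one, one_pow]
    have hγm : γ ^ m = ((1 - q) * α) ^ K := by rw [hK, pow_mul, hγ]
    have hρm : ρ ^ m = q ^ K := by rw [hK, pow_mul, hρ]
    have hq1 : q ^ K ≠ 1 := by
      intro h
      have : ‖q ^ K‖ < 1 := by
        rw [norm_pow]
        exact pow_lt_one₀ (norm_nonneg q) hq hK0.ne'
      rw [h] at this
      simp at this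
    have hq1' : 1 - q ^ K ≠ 0 := sub_ne_zero.mpr fun h => hq1 h.symm
    have hSn : ∑ j ∈ Finset.Icc 1 n, (ζ ^ m) ^ j = (n : ℂ) := by
      simp [hz1, Nat.card_Icc]
    rw [hSn]
    have hgeom : ∑ ℓ ∈ Finset.range k, γ ^ m * (ρ ^ m) ^ ℓ / (m : ℂ)
        = ((1 - q) * α) ^ K * (((q ^ K) ^ k - 1) / (q ^ K - 1)) / m := by
      rw [← Finset.sum_div, ← Finset.mul_sum, hγm, hρm, geom_sum_eq hq1]
    rw [hgeom]
    have hdvd : n ∣ m := ⟨K, hK⟩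
    simp only [bracketQ, if_pos hdvd, hmn]
    have hmC : (m : ℂ) = (n : ℂ) * (K : ℂ) := by rw [hK]; push_cast; ring
    have hKC : (K : ℂ) ≠ 0 := Nat.cast_ne_zero.mpr hK0.ne'
    have hnC : (n : ℂ) ≠ 0 := Nat.cast_ne_zero.mpr hn.ne'
    have hq2 : q ^ K - 1 ≠ 0 := sub_ne_zero.mpr hq1
    rw [hmC, mul_pow, ← pow_mul, mul_comm k K, pow_mul]
    simp only [mul_pow]
    field_simp [hq2]
    ring
  · have hz : ζ ^ m ≠ 1 := fun h => hd ((hprim.pow_eq_one_iff_dvd m).mp h)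
    have hzn : (ζ ^ m) ^ n = 1 := by
      rw [← pow_mul, mul_comm, pow_mul, hprim.pow_eq_one, one_pow]
    have hS : ∑ j ∈ Finset.Icc 1 n, (ζ ^ m) ^ j = 0 := by
      have h1 : ∑ j ∈ Finset.Icc 1 n, (ζ ^ m) ^ j
          = ζ ^ m * ∑ j ∈ Finset.range n, (ζ ^ m) ^ j := by
        rw [Finset.mul_sum, show Finset.Icc 1 n = Finset.Ico 1 (n + 1) from
          (Finset.Ico_add_one_right_eq_Icc 1 n).symm, Finset.sum_Ico_eq_sum_range]
        simp [pow_add]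
      rw [h1, geom_sum_eq hz, hzn]
      simp
    simp [bracketQ, hd, hS]
end

section
/- Let q, z ∈ ℂ with |q| < 1 and |(1−q)z| < 1. Then the series ∑_{k=1}^{∞} (1−q)^k z^k / (k(1−q^k)) converges absolutely, the infinite product ∏_{k=0}^{∞} (1 − (1−q)z q^k) converges to a nonzero complex number, and exp(∑_{k=1}^{∞} (1−q)^k z^k / (k(1−q^k))) · ∏_{k=0}^{∞} (1 − (1−q)z q^k) = 1. -/
open Complex

set_option maxHeartbeats 1000000

/-- For `|q| < 1` and `|(1-q)z| < 1`, the series `∑_{k=1}^∞ (1-q)^k z^k / (k(1-q^k))`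
converges absolutely, the infinite product `∏_{k=0}^∞ (1 - (1-q)z q^k)` converges to a
nonzero complex number, and
`exp(∑_{k=1}^∞ (1-q)^k z^k / (k(1-q^k))) ⬝ ∏_{k=0}^∞ (1 - (1-q)z q^k) = 1`.
(The `k = 0` term of the series below is `0` since division by `(0 : ℂ)` yields `0`.) -/
theorem qexp_series_prod (q z : ℂ) (hq : ‖q‖ < 1)
    (hz : ‖(1 - q) * z‖ < 1) :
    Summable (fun k : ℕ => ‖(1 - q) ^ k * z ^ k / ((k : ℂ) * (1 - q ^ k))‖) ∧
      Multipliable (fun k : ℕ => 1 - (1 - q) * z * q ^ k) ∧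
      (∏' k : ℕ, (1 - (1 - q) * z * q ^ k)) ≠ 0 ∧
      Complex.exp (∑' k : ℕ, (1 - q) ^ k * z ^ k / ((k : ℂ) * (1 - q ^ k))) *
          ∏' k : ℕ, (1 - (1 - q) * z * q ^ k) = 1 := by
  have hq' : ‖q‖ < 1 := hq
  have hz' : ‖(1 - q) * z‖ < 1 := hz
  set w : ℂ := (1 - q) * z with hw
  have hq0 : (0 : ℝ) ≤ ‖q‖ := norm_nonneg q
  have hw0 : (0 : ℝ) ≤ ‖w‖ := norm_nonneg w
  -- rewrite the series term
  have hterm : (fun k : ℕ => (1 - q) ^ k * z ^ k / ((k : ℂ) * (1 - q ^ k)))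
      = fun k : ℕ => w ^ k / ((k : ℂ) * (1 - q ^ k)) := by
    funext k; rw [hw, mul_pow]
  -- norm bounds
  have hwqn : ∀ n : ℕ, ‖w * q ^ n‖ < 1 := by
    intro n
    calc ‖w * q ^ n‖ = ‖w‖ * ‖q‖ ^ n := by rw [norm_mul, norm_pow]
    _ ≤ ‖w‖ * 1 := mul_le_mul_of_nonneg_left (pow_le_one₀ hq0 hq'.le) hw0
    _ < 1 := by simpa using hz'
  have hne : ∀ n : ℕ, (1 : ℂ) - w * q ^ n ≠ 0 := by
    intro n h
    have h1 : w * q ^ n = 1 := by linear_combination -h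
    have h2 := hwqn n
    rw [h1] at h2
    simp at h2
  -- the double sum
  set F : ℕ × ℕ → ℂ := fun p => (w * q ^ p.1) ^ p.2 / (p.2 : ℂ) with hF
  have hFsum : Summable F := by
    refine Summable.of_norm_bounded (g := fun p : ℕ × ℕ => ‖q‖ ^ p.1 * ‖w‖ ^ p.2) ?_ ?_
    · exact (summable_geometric_of_lt_one hq0 hq').mul_of_nonneg
        (summable_geometric_of_lt_one hw0 hz')
        (fun n => pow_nonneg hq0 n) (fun k => pow_nonneg hw0 k)
    · rintro ⟨n, k⟩
      rcases Nat.eq_zero_or_pos k with rfl | hk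
      · simp only [hF, pow_zero, Nat.cast_zero, div_zero, norm_zero]
        exact mul_nonneg (pow_nonneg hq0 n) (pow_nonneg hw0 0)
      · have h1 : ‖F (n, k)‖ ≤ ‖(w * q ^ n) ^ k‖ := by
          show ‖(w * q ^ n) ^ k / (k : ℂ)‖ ≤ ‖(w * q ^ n) ^ k‖
          rw [norm_div]
          apply div_le_self (norm_nonneg _)
          rw [Complex.norm_natCast]
          exact_mod_cast hk
        refine h1.trans ?_
        calc ‖(w * q ^ n) ^ k‖ = ‖q‖ ^ (n * k) * ‖w‖ ^ k := by
              rw [norm_pow, norm_mul, norm_pow, mul_pow, ← pow_mul]; ring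
        _ ≤ ‖q‖ ^ n * ‖w‖ ^ k := by
              apply mul_le_mul_of_nonneg_right _ (pow_nonneg hw0 k)
              exact pow_le_pow_of_le_one hq0 hq'.le (Nat.le_mul_of_pos_right n hk)
  -- fiberwise over n : sum over k is -log(1 - w q^n)
  have hfib1 : ∀ n : ℕ, HasSum (fun k => F (n, k)) (-Complex.log (1 - w * q ^ n)) := by
    intro n
    simp only [hF]
    exact Complex.hasSum_taylorSeries_neg_log (hwqn n)
  have hlog : HasSum (fun n : ℕ => -Complex.log (1 - w * q ^ n)) (∑' p, F p) :=
    hFsum.hasSum.prod_fiberwise hfib1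
  -- fiberwise over k : sum over n is w^k/(k(1-q^k))
  have hFsum' : Summable (F ∘ Prod.swap) :=
    ((Equiv.prodComm ℕ ℕ).summable_iff).mpr hFsum
  have hfib2 : ∀ k : ℕ, HasSum (fun n => F (n, k)) (w ^ k / ((k : ℂ) * (1 - q ^ k))) := by
    intro k
    rcases Nat.eq_zero_or_pos k with rfl | hk
    · simpa [hF] using hasSum_zero
    · have hqk : ‖q ^ k‖ < 1 := by
        rw [norm_pow]
        calc ‖q‖ ^ k ≤ ‖q‖ ^ 1 := pow_le_pow_of_le_one hq0 hq'.le hk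
        _ < 1 := by simpa using hq'
      have h := (hasSum_geometric_of_norm_lt_one hqk).mul_left (w ^ k / (k : ℂ))
      have hfun : (fun n : ℕ => w ^ k / (k : ℂ) * (q ^ k) ^ n) = fun n : ℕ => F (n, k) := by
        funext n
        show w ^ k / (k : ℂ) * (q ^ k) ^ n = (w * q ^ n) ^ k / (k : ℂ)
        rw [mul_pow w (q ^ n) k, ← pow_mul, ← pow_mul, mul_comm n k, div_mul_eq_mul_div]
      have hval : w ^ k / ((k : ℂ) * (1 - q ^ k)) = w ^ k / (k : ℂ) * (1 - q ^ k)⁻¹ := by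
        rw [← div_div, div_eq_mul_inv]
      rw [hval]
      exact hfun ▸ h
  have hseries : HasSum (fun k : ℕ => w ^ k / ((k : ℂ) * (1 - q ^ k))) (∑' p, F p) := by
    have h := hFsum'.hasSum.prod_fiberwise (g := fun k : ℕ => w ^ k / ((k : ℂ) * (1 - q ^ k)))
      (fun j => hfib2 j)
    rwa [show (∑' b : ℕ × ℕ, (F ∘ Prod.swap) b) = ∑' p : ℕ × ℕ, F p from
      Equiv.tsum_eq (Equiv.prodComm ℕ ℕ) F] at h
  set A : ℂ := ∑' p, F p with hA
  -- part 1 : absolute convergence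
  have habs : Summable (fun k : ℕ => ‖(1 - q) ^ k * z ^ k / ((k : ℂ) * (1 - q ^ k))‖) := by
    refine Summable.of_nonneg_of_le (fun k => norm_nonneg _) ?_
      (((summable_geometric_of_lt_one hw0 hz').mul_left ((1 - ‖q‖)⁻¹)))
    · intro k
      rcases Nat.eq_zero_or_pos k with rfl | hk
      · simp only [pow_zero, Nat.cast_zero, zero_mul, sub_self, mul_zero, div_zero, norm_zero,
          one_mul]
        exact mul_nonneg (inv_nonneg.mpr (by linarith)) (pow_nonneg hw0 0)
      · have hden : (1 : ℝ) - ‖q‖ ≤ ‖(k : ℂ) * (1 - q ^ k)‖ := by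
          rw [norm_mul]
          have h1 : (1:ℝ) ≤ ‖(k : ℂ)‖ := by
            rw [Complex.norm_natCast]; exact_mod_cast hk
          have h3 : ‖q ^ k‖ ≤ ‖q‖ := by
            rw [norm_pow]
            calc ‖q‖ ^ k ≤ ‖q‖ ^ 1 := pow_le_pow_of_le_one hq0 hq'.le hk
            _ = ‖q‖ := pow_one _
          have h2 : (1:ℝ) - ‖q‖ ≤ ‖(1:ℂ) - q ^ k‖ := by
            have h4 := norm_sub_norm_le (1:ℂ) (q ^ k)
            simp only [norm_one] at h4
            linarith
          calc (1:ℝ) - ‖q‖ = 1 * (1 - ‖q‖) := (one_mul _).symm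
          _ ≤ ‖(k : ℂ)‖ * ‖(1:ℂ) - q ^ k‖ := mul_le_mul h1 h2 (by linarith) (norm_nonneg _)
        have heq : ‖(1 - q) ^ k * z ^ k / ((k : ℂ) * (1 - q ^ k))‖
            = ‖w‖ ^ k / ‖(k : ℂ) * (1 - q ^ k)‖ := by
          show ‖(1 - q) ^ k * z ^ k / ((k : ℂ) * (1 - q ^ k))‖ = _
          rw [norm_div, ← mul_pow, ← hw, norm_pow]
        rw [heq]
        calc ‖w‖ ^ k / ‖(k : ℂ) * (1 - q ^ k)‖ ≤ ‖w‖ ^ k / (1 - ‖q‖) :=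
              div_le_div_of_nonneg_left (pow_nonneg hw0 k) (by linarith) hden
        _ = (1 - ‖q‖)⁻¹ * ‖w‖ ^ k := by rw [div_eq_mul_inv, mul_comm]
  -- the product
  have hlogsum : HasSum (fun n : ℕ => Complex.log (1 - w * q ^ n)) (-A) := by
    have h := hlog.neg
    simpa using h
  have hprod : HasProd (fun n : ℕ => 1 - w * q ^ n) (Complex.exp (-A)) := by
    have h := hlogsum.cexp
    have hfun : (cexp ∘ fun n : ℕ => Complex.log (1 - w * q ^ n))
        = fun n : ℕ => 1 - w * q ^ n := by
      funext n
      exact Complex.exp_log (hne n)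
    rwa [hfun] at h
  refine ⟨habs, hprod.multipliable, ?_, ?_⟩
  · rw [hprod.tprod_eq]
    exact Complex.exp_ne_zero _
  · rw [hprod.tprod_eq, hterm, hseries.tsum_eq, ← Complex.exp_add]
    simp
end

section
/- Let F be a field. Let w, w̄ : ℤ → ℕ → F satisfy w(s, 0) = 1 and w̄(s, 0) ≠ 0 for all s ∈ ℤ, and let φ, φ̄ : ℤ → ℕ → F (with φ(s, n), φ̄(s, n) regarded as defined for n ≥ 1). Suppose that for all integers s, s', ∑_{n=1}^{s'−s+1} φ(s', n) · w(s, s'−s+1−n) = ∑_{n=1}^{s−s'−1} φ̄(s', n) · w̄(s, s−s'−1−n), where a sum over an empty range equals 0. Then φ(s, n) = 0 and φ̄(s, n) = 0 for every s ∈ ℤ and every n ≥ 1. -/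
open Finset

/-- The generalized (two-sided, Toda) Lemma in coefficient form: if `w(s,0) = 1`,
`w̄(s,0) ≠ 0`, and for all integers `s, s'`
`∑_{n=1}^{s'-s+1} φ(s',n) w(s, s'-s+1-n) = ∑_{n=1}^{s-s'-1} φ̄(s',n) w̄(s, s-s'-1-n)`
(empty sums being `0`), then `φ(s,n) = 0` and `φ̄(s,n) = 0` for all `s ∈ ℤ`, `n ≥ 1`. -/
theorem phi_phibar_eq_zero (F : Type*) [Field F]
    (w wbar : ℤ → ℕ → F) (φ φbar : ℤ → ℕ → F)
    (hw : ∀ s : ℤ, w s 0 = 1) (hwbar : ∀ s : ℤ, wbar s 0 ≠ 0)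
    (h : ∀ s s' : ℤ,
      ∑ n ∈ Finset.Icc 1 (s' - s + 1).toNat, φ s' n * w s ((s' - s + 1).toNat - n) =
        ∑ n ∈ Finset.Icc 1 (s - s' - 1).toNat, φbar s' n * wbar s ((s - s' - 1).toNat - n)) :
    ∀ s : ℤ, ∀ n : ℕ, 1 ≤ n → φ s n = 0 ∧ φbar s n = 0 := by
  intro s
  have key : ∀ n : ℕ, 1 ≤ n → φ s n = 0 := by
    intro n
    induction n using Nat.strong_induction_on with
    | _ n ih =>
      intro hn
      have H := h (s - n + 1) s
      have h1 : (s - (s - n + 1) + 1).toNat = n := by omega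
      have h2 : ((s - n + 1) - s - 1).toNat = 0 := by omega
      rw [h1, h2] at H
      simp only [Finset.Icc_eq_empty_of_lt (by norm_num : (1:ℕ) > 0),
        Finset.sum_empty] at H
      have hsum : ∑ k ∈ Finset.Icc 1 n, φ s k * w (s - n + 1) (n - k) = φ s n := by
        rw [Finset.sum_eq_single_of_mem n (by simp [hn])]
        · rw [Nat.sub_self, hw, mul_one]
        · intro b hb hbn
          have hb' := Finset.mem_Icc.mp hb
          rw [ih b (lt_of_le_of_ne hb'.2 hbn) hb'.1, zero_mul]
      rw [hsum] at H
      exact H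
  have keybar : ∀ n : ℕ, 1 ≤ n → φbar s n = 0 := by
    intro n
    induction n using Nat.strong_induction_on with
    | _ n ih =>
      intro hn
      have H := h (s + 1 + n) s
      have h1 : (s - (s + 1 + n) + 1).toNat = 0 := by omega
      have h2 : ((s + 1 + n) - s - 1).toNat = n := by omega
      rw [h1, h2] at H
      simp only [Finset.Icc_eq_empty_of_lt (by norm_num : (1:ℕ) > 0),
        Finset.sum_empty] at H
      have hsum : ∑ k ∈ Finset.Icc 1 n, φbar s k * wbar (s + 1 + n) (n - k)
          = φbar s n * wbar (s + 1 + n) 0 := by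
        rw [Finset.sum_eq_single_of_mem n (by simp [hn])]
        · rw [Nat.sub_self]
        · intro b hb hbn
          have hb' := Finset.mem_Icc.mp hb
          rw [ih b (lt_of_le_of_ne hb'.2 hbn) hb'.1, zero_mul]
      rw [hsum] at H
      exact (mul_eq_zero.mp H.symm).resolve_right (hwbar _)
  exact fun n hn => ⟨key n hn, keybar n hn⟩
end

section
/- Let β > 0 be a real number and z ∈ ℂ with |z| < 1. For each ℏ > 0 the series S(ℏ) = ∑_{k=1}^{∞} z^k / (k(1 − e^{−kβℏ})) converges absolutely, and βℏ · S(ℏ) → Li₂(z) as ℏ → 0⁺, where Li₂(z) = ∑_{k=1}^{∞} z^k / k². -/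
open Complex Filter

private lemma aux_cast (β ℏ : ℝ) (k : ℕ) :
    (1 - Complex.exp (-((k : ℂ) * β * ℏ))) = (((1 - Real.exp (-((k : ℝ) * β * ℏ))) : ℝ) : ℂ) := by
  have h : -((k:ℂ) * β * ℏ) = ((-((k:ℝ) * β * ℏ) : ℝ) : ℂ) := by push_cast; ring
  rw [h, ← Complex.ofReal_exp]
  push_cast
  ring

private lemma aux_exp_nonneg (β ℏ : ℝ) (hβ : 0 ≤ β) (hℏ : 0 ≤ ℏ) (k : ℕ) :
    0 ≤ 1 - Real.exp (-((k : ℝ) * β * ℏ)) := by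
  have : Real.exp (-((k:ℝ) * β * ℏ)) ≤ 1 := Real.exp_le_one_iff.mpr (neg_nonpos.mpr (by positivity))
  linarith

private lemma aux_lb {t : ℝ} (ht : 0 < t) : t / (1 + t) ≤ 1 - Real.exp (-t) := by
  have h1 : (0:ℝ) < 1 + t := by linarith
  have h : Real.exp (-t) ≤ 1 / (1 + t) := by
    rw [Real.exp_neg, inv_le_comm₀ (Real.exp_pos t) (by positivity)]
    calc (1/(1+t))⁻¹ = 1 + t := by field_simp
    _ ≤ Real.exp t := (Real.add_one_le_exp t).trans_eq' (by ring)
  have : t/(1+t) = 1 - 1/(1+t) := by field_simp; ring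
  linarith

private lemma aux_pos {t : ℝ} (ht : 0 < t) : 0 < 1 - Real.exp (-t) := by
  have := Real.exp_lt_one_iff.mpr (by linarith : -t < 0)
  linarith

private lemma aux_abs (β ℏ : ℝ) (hβ : 0 ≤ β) (hℏ : 0 ≤ ℏ) (z : ℂ) (k : ℕ) :
    ‖z ^ k / ((k : ℂ) * (1 - Complex.exp (-((k : ℂ) * β * ℏ))))‖ =
      ‖z‖ ^ k / ((k : ℝ) * (1 - Real.exp (-((k : ℝ) * β * ℏ)))) := by
  rw [norm_div, norm_mul, norm_pow, aux_cast, Complex.norm_natCast, Complex.norm_real, Real.norm_eq_abs,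
    _root_.abs_of_nonneg (aux_exp_nonneg β ℏ hβ hℏ k)]

private lemma aux_ratio (c : ℂ) (hc : c ≠ 0) :
    Tendsto (fun ℏ : ℝ => (c * ℏ) / (1 - Complex.exp (-(c * ℏ))))
      (nhdsWithin 0 (Set.Ioi 0)) (nhds 1) := by
  have hderiv := Complex.hasDerivAt_exp 0
  rw [hasDerivAt_iff_tendsto_slope] at hderiv
  have hmap : Tendsto (fun ℏ : ℝ => -(c * (ℏ:ℂ))) (nhdsWithin 0 (Set.Ioi 0))
      (nhdsWithin 0 {(0:ℂ)}ᶜ) := by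
    rw [tendsto_nhdsWithin_iff]
    constructor
    · have h1 : Continuous (fun ℏ : ℝ => -(c * (ℏ:ℂ))) := by continuity
      have := h1.tendsto 0
      simp only [Complex.ofReal_zero, mul_zero, neg_zero] at this
      exact this.mono_left nhdsWithin_le_nhds
    · filter_upwards [self_mem_nhdsWithin] with ℏ hℏ
      have hℏ0 : (ℏ:ℂ) ≠ 0 := by exact_mod_cast ne_of_gt hℏ
      simp [hc, hℏ0]
  have hslope : Tendsto (fun ℏ : ℝ => (Complex.exp (-(c*ℏ)) - 1) / (-(c*ℏ)))
      (nhdsWithin 0 (Set.Ioi 0)) (nhds 1) := by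
    have := hderiv.comp hmap
    simp only [Complex.exp_zero] at this
    refine this.congr fun ℏ => ?_
    simp [slope_def_field]
  have hinv := hslope.inv₀ one_ne_zero
  simp only [inv_one] at hinv
  refine hinv.congr fun ℏ => ?_
  rw [inv_div, ← neg_div_neg_eq]
  ring_nf

/-- For `β > 0` and `|z| < 1`, the series `S(ℏ) = ∑_{k=1}^∞ z^k / (k(1 - e^{-kβℏ}))`
converges absolutely for each `ℏ > 0`, and `βℏ · S(ℏ) → Li₂(z) = ∑_{k=1}^∞ z^k/k²`
as `ℏ → 0⁺`. (The `k = 0` terms below vanish since division by `(0 : ℂ)` yields `0`.) -/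
theorem qexp_quasiclassical_limit (β : ℝ) (hβ : 0 < β) (z : ℂ) (hz : ‖z‖ < 1) :
    (∀ ℏ : ℝ, 0 < ℏ →
      Summable (fun k : ℕ =>
        ‖z ^ k / ((k : ℂ) * (1 - Complex.exp (-((k : ℂ) * β * ℏ))))‖)) ∧
    Filter.Tendsto
      (fun ℏ : ℝ => ((β : ℂ) * (ℏ : ℂ)) *
        ∑' k : ℕ, z ^ k / ((k : ℂ) * (1 - Complex.exp (-((k : ℂ) * β * ℏ)))))
      (nhdsWithin 0 (Set.Ioi 0))
      (nhds (∑' k : ℕ, z ^ k / (k : ℂ) ^ 2)) := by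
  constructor
  · -- Summability
    intro ℏ hℏ
    have hE : 0 < 1 - Real.exp (-(β * ℏ)) := aux_pos (by positivity)
    refine Summable.of_nonneg_of_le (fun k => norm_nonneg _) (fun k => ?_)
      ((summable_geometric_of_lt_one (norm_nonneg z) hz).mul_right
        (1 - Real.exp (-(β * ℏ)))⁻¹)
    rw [aux_abs β ℏ hβ.le hℏ.le]
    rcases Nat.eq_zero_or_pos k with rfl | hk
    · simp [hE.le]

    · have hk1 : (1:ℝ) ≤ (k:ℝ) := by exact_mod_cast hk
      have ht : (0:ℝ) < (k:ℝ) * β * ℏ := by positivity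
      have hDk : 0 < 1 - Real.exp (-((k:ℝ) * β * ℏ)) := aux_pos ht
      have hmono : 1 - Real.exp (-(β * ℏ)) ≤ (k:ℝ) * (1 - Real.exp (-((k:ℝ) * β * ℏ))) := by
        have he : Real.exp (-((k:ℝ) * β * ℏ)) ≤ Real.exp (-(β * ℏ)) := by
          apply Real.exp_le_exp.mpr
          nlinarith
        nlinarith
      rw [div_eq_mul_inv]
      gcongr

  · -- The limit
    simp only [← tsum_mul_left]
    apply tendsto_tsum_of_dominated_convergence
      (bound := fun k : ℕ => (1 + β) * ‖z‖ ^ k)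
    · exact (summable_geometric_of_lt_one (norm_nonneg z) hz).mul_left _
    · -- pointwise limits
      intro k
      rcases Nat.eq_zero_or_pos k with rfl | hk
      · simp
      · have hk0 : ((k:ℂ)) ≠ 0 := Nat.cast_ne_zero.mpr hk.ne'
        have hc : ((k:ℂ) * (β:ℂ)) ≠ 0 := mul_ne_zero hk0 (by exact_mod_cast hβ.ne')
        have h2 := (aux_ratio ((k:ℂ) * (β:ℂ)) hc).const_mul (z ^ k / (k:ℂ) ^ 2)
        rw [mul_one] at h2
        refine h2.congr fun ℏ => ?_
        rcases eq_or_ne (1 - Complex.exp (-((k:ℂ) * β * ℏ))) 0 with hw | hw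
        · rw [hw]
          simp
        · field_simp
    · -- uniform bound
      filter_upwards [Ioc_mem_nhdsGT (zero_lt_one)] with ℏ hℏ k
      obtain ⟨hℏ0, hℏ1⟩ := hℏ
      rw [norm_mul, norm_mul, Complex.norm_real, Complex.norm_real, Real.norm_eq_abs, Real.norm_eq_abs,
        abs_of_pos hβ, abs_of_pos hℏ0, aux_abs β ℏ hβ.le hℏ0.le]
      rcases Nat.eq_zero_or_pos k with rfl | hk
      · simp
        positivity
      · have hk1 : (1:ℝ) ≤ (k:ℝ) := by exact_mod_cast hk
        have ht : (0:ℝ) < (k:ℝ) * β * ℏ := by positivity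
        have hlb := aux_lb ht
        have hD : 0 < 1 - Real.exp (-((k:ℝ) * β * ℏ)) := aux_pos ht
        have hlb' : (k:ℝ) * β * ℏ ≤ (1 - Real.exp (-((k:ℝ) * β * ℏ))) * (1 + (k:ℝ) * β * ℏ) := by
          rw [div_le_iff₀ (by positivity)] at hlb
          linarith [hlb]
        set D := 1 - Real.exp (-((k:ℝ) * β * ℏ)) with hDdef
        have key : β * ℏ ≤ (1 + β) * ((k:ℝ) * D) := by
          have h1 := mul_le_mul_of_nonneg_left hlb' (by positivity : (0:ℝ) ≤ (1+β) * (k:ℝ))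
          have hk2 : 1 ≤ (k:ℝ)^2 := by nlinarith
          have e1 : 0 ≤ β * ℏ * ((k:ℝ)^2 - 1) :=
            mul_nonneg (by positivity) (by linarith)
          have e2 : 0 ≤ (k:ℝ) * β^2 * ℏ * ((k:ℝ) - ℏ) := by
            have : (0:ℝ) ≤ (k:ℝ) - ℏ := by linarith
            positivity
          have h3 : β * ℏ * (1 + (k:ℝ)*β*ℏ) ≤ (1+β) * (k:ℝ) * ((k:ℝ)*β*ℏ) := by nlinarith [e1, e2]
          have h5 : β * ℏ * (1 + (k:ℝ)*β*ℏ) ≤ ((1+β) * ((k:ℝ) * D)) * (1 + (k:ℝ)*β*ℏ) := by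
            nlinarith [h3.trans h1]
          exact le_of_mul_le_mul_right h5 (by positivity)
        have hzk : (0:ℝ) ≤ ‖z‖ ^ k := by positivity
        calc β * ℏ * (‖z‖ ^ k / ((k:ℝ) * D))
            = ‖z‖ ^ k * (β * ℏ / ((k:ℝ) * D)) := by ring
          _ ≤ ‖z‖ ^ k * (1 + β) := by
              gcongr
              rw [div_le_iff₀ (by positivity)]
              linarith [key]
          _ = (1 + β) * ‖z‖ ^ k := by ring
end

section
/- Let β > 0 be a real number and z ∈ ℂ with |z| < 1. Then there exists a constant C > 0 such that for every ℏ > 0, |∑_{k=1}^{∞} z^k / (k(1 − e^{−kβℏ})) − (1/(βℏ)) ∑_{k=1}^{∞} z^k / k²| ≤ C. -/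
open Complex

lemma aux_real (t : ℝ) (ht : 0 < t) :
    0 ≤ 1/(1 - Real.exp (-t)) - 1/t ∧ 1/(1 - Real.exp (-t)) - 1/t ≤ 1 := by
  have he : Real.exp (-t) < 1 := by
    rw [Real.exp_lt_one_iff]; linarith
  have hu : 0 < 1 - Real.exp (-t) := by linarith
  have h1 : 1 - Real.exp (-t) ≤ t := by
    have := Real.add_one_le_exp (-t); linarith
  have h2 : t ≤ (t + 1) * (1 - Real.exp (-t)) := by
    have ha := Real.add_one_le_exp t
    have hb : Real.exp t * Real.exp (-t) = 1 := by
      rw [← Real.exp_add]; simp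
    have hc := Real.exp_pos (-t)
    nlinarith
  constructor
  · rw [div_sub_div _ _ (ne_of_gt hu) (ne_of_gt ht)]
    apply div_nonneg (by nlinarith) (by positivity)
  · rw [div_sub_div _ _ (ne_of_gt hu) (ne_of_gt ht), div_le_one (by positivity)]
    nlinarith

lemma key_bound (β ℏ : ℝ) (hβ : 0 < β) (hℏ : 0 < ℏ) (z : ℂ) (k : ℕ) :
    ‖z ^ k / ((k : ℂ) * (1 - Complex.exp (-((k : ℂ) * β * ℏ)))) -
      (1 / ((β : ℂ) * ℏ)) * (z ^ k / (k : ℂ) ^ 2)‖ ≤ ‖z‖ ^ k := by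
  rcases Nat.eq_zero_or_pos k with hk | hk
  · subst hk; simp
  have hkR : (0 : ℝ) < k := by exact_mod_cast hk
  set t : ℝ := k * β * ℏ with ht
  have htpos : 0 < t := by positivity
  have he : Complex.exp (-((k : ℂ) * β * ℏ)) = ((Real.exp (-t) : ℝ) : ℂ) := by
    rw [Complex.ofReal_exp]; norm_cast
  have hu : (1 : ℝ) - Real.exp (-t) ≠ 0 := by
    have : Real.exp (-t) < 1 := by rw [Real.exp_lt_one_iff]; linarith
    linarith
  have hkC : (k : ℂ) ≠ 0 := by exact_mod_cast hkR.ne'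
  have hβC : (β : ℂ) ≠ 0 := by exact_mod_cast hβ.ne'
  have hℏC : (ℏ : ℂ) ≠ 0 := by exact_mod_cast hℏ.ne'
  have huC : (1 : ℂ) - ((Real.exp (-t) : ℝ) : ℂ) ≠ 0 := by
    exact_mod_cast hu
  have htC : ((t : ℝ) : ℂ) = (k : ℂ) * β * ℏ := by push_cast [ht]; ring
  have heq : z ^ k / ((k : ℂ) * (1 - Complex.exp (-((k : ℂ) * β * ℏ)))) -
      (1 / ((β : ℂ) * ℏ)) * (z ^ k / (k : ℂ) ^ 2) =
      (z ^ k / k) * (((1/(1 - Real.exp (-t)) - 1/t : ℝ) : ℂ)) := by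
    have e1 : z ^ k / ((k : ℂ) * (1 - ((Real.exp (-t) : ℝ) : ℂ))) =
        z ^ k / (k : ℂ) * (1 / (1 - ((Real.exp (-t) : ℝ) : ℂ))) := by
      rw [div_mul_div_comm, mul_one]
    have e2 : (1 / ((β : ℂ) * ℏ)) * (z ^ k / (k : ℂ) ^ 2) =
        z ^ k / (k : ℂ) * (1 / ((k : ℂ) * β * ℏ)) := by
      rw [div_mul_div_comm, div_mul_div_comm, one_mul, mul_one]
      congr 1
      ring
    rw [Complex.ofReal_sub, Complex.ofReal_div, Complex.ofReal_div,
      Complex.ofReal_one, htC, he, e1, e2, mul_sub]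
    norm_cast
  rw [heq]
  rw [norm_mul]
  have h1 : ‖z ^ k / k‖ ≤ ‖z‖ ^ k := by
    rw [norm_div, norm_pow]
    have : ‖(k : ℂ)‖ = (k : ℝ) := by
      rw [Complex.norm_natCast]
    rw [this]
    have hk1 : (1 : ℝ) ≤ (k : ℝ) := by exact_mod_cast hk
    calc ‖z‖ ^ k / (k : ℝ) ≤ ‖z‖ ^ k / 1 := by
          apply div_le_div_of_nonneg_left (by positivity) one_pos hk1
      _ = ‖z‖ ^ k := by ring
  have h2 : ‖(((1/(1 - Real.exp (-t)) - 1/t : ℝ) : ℂ))‖ ≤ 1 := by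
    rw [Complex.norm_real]
    obtain ⟨ha, hb⟩ := aux_real t htpos
    rw [Real.norm_of_nonneg ha]; exact hb
  calc ‖z ^ k / k‖ * ‖_‖ ≤ ‖z‖ ^ k * 1 :=
        mul_le_mul h1 h2 (by positivity) (by positivity)
    _ = ‖z‖ ^ k := by ring


/-- For `β > 0` and `|z| < 1`, the difference between the exact phase
`∑_{k=1}^∞ z^k/(k(1 - e^{-kβℏ}))` and the leading dilogarithm term
`(1/(βℏ)) Li₂(z)` stays bounded as `ℏ` ranges over `(0, ∞)`.
(The `k = 0` terms below vanish since division by `(0 : ℂ)` yields `0`.) -/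
theorem qexp_phase_bounded_remainder (β : ℝ) (hβ : 0 < β) (z : ℂ)
    (hz : ‖z‖ < 1) :
    ∃ C : ℝ, 0 < C ∧ ∀ ℏ : ℝ, 0 < ℏ →
      ‖
        ((∑' k : ℕ, z ^ k / ((k : ℂ) * (1 - Complex.exp (-((k : ℂ) * β * ℏ))))) -
          (1 / ((β : ℂ) * (ℏ : ℂ))) * ∑' k : ℕ, z ^ k / (k : ℂ) ^ 2)‖ ≤ C := by
  have hr : 0 ≤ ‖z‖ := norm_nonneg _
  have hC : 0 < (1 - ‖z‖)⁻¹ := by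
    apply inv_pos.mpr; linarith
  refine ⟨(1 - ‖z‖)⁻¹, hC, ?_⟩
  intro ℏ hℏ
  have hgeo : Summable fun k : ℕ => ‖z‖ ^ k :=
    summable_geometric_of_lt_one hr hz
  have hbound := fun k => key_bound β ℏ hβ hℏ z k
  have hc0 : Summable fun k : ℕ => z ^ k / (k : ℂ) ^ 2 := by
    apply Summable.of_norm_bounded hgeo
    intro k
    rcases Nat.eq_zero_or_pos k with hk | hk
    · subst hk; simp
    · have hk1 : (1 : ℝ) ≤ (k : ℝ) := by exact_mod_cast hk
      rw [norm_div, norm_pow, norm_pow, Complex.norm_natCast]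
      calc ‖z‖ ^ k / (k : ℝ) ^ 2 ≤ ‖z‖ ^ k / 1 := by
            apply div_le_div_of_nonneg_left (by positivity) one_pos (by nlinarith)
        _ = ‖z‖ ^ k := by ring
  have hc : Summable fun k : ℕ => (1 / ((β : ℂ) * ℏ)) * (z ^ k / (k : ℂ) ^ 2) :=
    hc0.mul_left _
  have hd : Summable fun k : ℕ =>
      z ^ k / ((k : ℂ) * (1 - Complex.exp (-((k : ℂ) * β * ℏ)))) -
        (1 / ((β : ℂ) * ℏ)) * (z ^ k / (k : ℂ) ^ 2) := by
    apply Summable.of_norm_bounded hgeo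
    intro k
    exact hbound k
  have ha : Summable fun k : ℕ =>
      z ^ k / ((k : ℂ) * (1 - Complex.exp (-((k : ℂ) * β * ℏ)))) := by
    have := hd.add hc
    simpa using this
  rw [← tsum_mul_left, ← Summable.tsum_sub ha hc]
  have hnorm : Summable fun k : ℕ =>
      ‖z ^ k / ((k : ℂ) * (1 - Complex.exp (-((k : ℂ) * β * ℏ)))) -
        (1 / ((β : ℂ) * ℏ)) * (z ^ k / (k : ℂ) ^ 2)‖ := by
    apply Summable.of_nonneg_of_le (fun k => norm_nonneg _) _ hgeo
    intro k
    exact hbound k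
  calc ‖∑' k : ℕ, _‖ = ‖∑' k : ℕ, _‖ := rfl
    _ ≤ ∑' k : ℕ, ‖z ^ k / ((k : ℂ) * (1 - Complex.exp (-((k : ℂ) * β * ℏ)))) -
        (1 / ((β : ℂ) * ℏ)) * (z ^ k / (k : ℂ) ^ 2)‖ := norm_tsum_le_tsum_norm hnorm
    _ ≤ ∑' k : ℕ, ‖z‖ ^ k := by
        apply Summable.tsum_le_tsum _ hnorm hgeo
        intro k
        exact hbound k
    _ = (1 - ‖z‖)⁻¹ := tsum_geometric_of_lt_one hr hz
end
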